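/- Let Γ = {Σ_{i=0}^n a_i 3^i : a_i ∈ {0,1}} ⊂ ℕ₀. If μ is a compactly supported Borel probability measure on ℝ such that {e_γ : γ ∈ Γ} is orthogonal in L²(μ), then μ̂(n) = 0 for every nonzero integer n; moreover {e_γ : γ ∈ Γ} is never complete in L²(μ) for such μ, since e_2 is orthogonal to e_γ for all γ ∈ Γ but 2 ∉ Γ. -/

import Mathlib

/-! Every integer is a difference of two elements of `Γ` (balanced ternary), so orthogonality of
`{e_γ}` forces `μ̂(n) = 0` for all `n ≠ 0`. As `2 ∉ Γ`, the unit vector `e_2` is then orthogonal to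
every `e_γ`, and the closed span of the `e_γ` misses it. -/

open Complex Real MeasureTheory

/-- The set of nonnegative integers whose base-3 expansion uses only digits 0 and 1. -/
def GammaThree : Set ℕ :=
  {n : ℕ | ∃ (m : ℕ) (a : ℕ → ℕ), (∀ i, a i ≤ 1) ∧
    n = ∑ i ∈ Finset.range (m + 1), a i * 3 ^ i}

/-- The Fourier transform `μ̂(t) = ∫ e^{2πitx} dμ(x)` of a measure on `ℝ`. -/
noncomputable def muHat1 (μ : Measure ℝ) (t : ℝ) : ℂ :=
  ∫ x, Complex.exp (2 * Real.pi * Complex.I * t * x) ∂μ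

lemma zero_mem_gammaThree : 0 ∈ GammaThree := ⟨0, fun _ => 0, fun _ => zero_le_one, by simp⟩

lemma three_mul_add_mem_gammaThree {n r : ℕ} (hr : r ≤ 1) (hn : n ∈ GammaThree) :
    3 * n + r ∈ GammaThree := by
  obtain ⟨m, a, ha, hsum⟩ := hn
  refine ⟨m + 1, fun i => if i = 0 then r else a (i - 1),
    fun i => by dsimp only; split <;> simp [hr, ha], ?_⟩
  rw [Finset.sum_range_succ']
  simp only [Nat.add_sub_cancel, if_neg (Nat.succ_ne_zero _)]
  rw [hsum, Finset.mul_sum]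
  congr 1
  · exact Finset.sum_congr rfl fun i _ => by ring
  · simp

lemma two_notMem_gammaThree : 2 ∉ GammaThree := by
  rintro ⟨m, a, ha, hsum⟩
  have h3 : ∑ i ∈ Finset.range m, a (i + 1) * 3 ^ (i + 1)
      = 3 * ∑ i ∈ Finset.range m, a (i + 1) * 3 ^ i := by
    rw [Finset.mul_sum]; exact Finset.sum_congr rfl fun i _ => by ring
  rw [Finset.sum_range_succ', h3] at hsum
  have := ha 0
  omega

/-- Balanced ternary: `N = 3q + r` with `r ∈ {-1, 0, 1}`, and the digit `±1` goes to `a` or `b`. -/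
lemma exists_gammaThree_sub_eq_natCast (N : ℕ) :
    ∃ a ∈ GammaThree, ∃ b ∈ GammaThree, (a : ℤ) - b = N := by
  induction N using Nat.strong_induction_on with
  | _ N ih =>
    rcases Nat.eq_zero_or_pos N with rfl | hN
    · exact ⟨0, zero_mem_gammaThree, 0, zero_mem_gammaThree, by simp⟩
    have h3 : N % 3 < 3 := Nat.mod_lt _ (by norm_num)
    interval_cases hr : N % 3
    · obtain ⟨a, ha, b, hb, hab⟩ := ih (N / 3) (by omega)
      exact ⟨3 * a + 0, three_mul_add_mem_gammaThree zero_le_one ha,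
        3 * b + 0, three_mul_add_mem_gammaThree zero_le_one hb, by push_cast; omega⟩
    · obtain ⟨a, ha, b, hb, hab⟩ := ih (N / 3) (by omega)
      exact ⟨3 * a + 1, three_mul_add_mem_gammaThree le_rfl ha,
        3 * b + 0, three_mul_add_mem_gammaThree zero_le_one hb, by push_cast; omega⟩
    · obtain ⟨a, ha, b, hb, hab⟩ := ih (N / 3 + 1) (by omega)
      exact ⟨3 * a + 0, three_mul_add_mem_gammaThree zero_le_one ha,
        3 * b + 1, three_mul_add_mem_gammaThree le_rfl hb, by push_cast; omega⟩

lemma exists_gammaThree_sub_eq (n : ℤ) :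
    ∃ a ∈ GammaThree, ∃ b ∈ GammaThree, (a : ℤ) - b = n := by
  obtain ⟨N, rfl | rfl⟩ := Int.eq_nat_or_neg n
  · exact exists_gammaThree_sub_eq_natCast N
  · obtain ⟨a, ha, b, hb, hab⟩ := exists_gammaThree_sub_eq_natCast N
    exact ⟨b, hb, a, ha, by omega⟩

lemma muHat1_intCast_eq_zero_of_orthogonal {μ : Measure ℝ}
    (horth : ∀ γ ∈ GammaThree, ∀ γ' ∈ GammaThree, γ ≠ γ' →
      muHat1 μ ((γ : ℝ) - (γ' : ℝ)) = 0)
    {n : ℤ} (hn : n ≠ 0) : muHat1 μ n = 0 := by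
  obtain ⟨a, ha, b, hb, rfl⟩ := exists_gammaThree_sub_eq n
  have hab : a ≠ b := by rintro rfl; simp at hn
  simpa using horth a ha b hb hab

lemma muHat1_zero (μ : Measure ℝ) [IsProbabilityMeasure μ] : muHat1 μ 0 = 1 := by
  simp [muHat1]

lemma inner_toLp_exp {μ : Measure ℝ} {s t : ℕ}
    (hs : MemLp (fun x : ℝ => Complex.exp (2 * Real.pi * Complex.I * s * x)) 2 μ)
    (ht : MemLp (fun x : ℝ => Complex.exp (2 * Real.pi * Complex.I * t * x)) 2 μ) :
    inner ℂ (hs.toLp _) (ht.toLp _) = muHat1 μ ((t : ℝ) - s) := by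
  rw [L2.inner_def, muHat1]
  refine integral_congr_ae ?_
  filter_upwards [hs.coeFn_toLp, ht.coeFn_toLp] with x hsx htx
  rw [hsx, htx, RCLike.inner_apply, ← Complex.exp_conj, ← Complex.exp_add]
  congr 1
  simp only [map_mul, Complex.conj_I, Complex.conj_ofReal, map_ofNat, map_natCast]
  push_cast
  ring

lemma Submodule.topologicalClosure_span_ne_top_of_inner_eq_zero {𝕜 E : Type*} [RCLike 𝕜]
    [NormedAddCommGroup E] [InnerProductSpace 𝕜 E] {s : Set E} {f : E} (hf : f ≠ 0)
    (hs : ∀ v ∈ s, inner 𝕜 f v = 0) : (span 𝕜 s).topologicalClosure ≠ ⊤ := by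
  intro htop
  have hle : (span 𝕜 s).topologicalClosure ≤ (𝕜 ∙ f)ᗮ :=
    topologicalClosure_minimal _
      (span_le.2 fun v hv => mem_orthogonal_singleton_iff_inner_right.2 (hs v hv))
      (isClosed_orthogonal _)
  have hff : inner 𝕜 f f = 0 := mem_orthogonal_singleton_iff_inner_right.1 (hle (htop ▸ mem_top))
  exact hf (inner_self_eq_zero.1 hff)

theorem stmt19_general (μ : Measure ℝ) [IsProbabilityMeasure μ]
    (hmem : ∀ n : ℕ, MemLp (fun x : ℝ => Complex.exp (2 * Real.pi * Complex.I * n * x)) 2 μ)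
    (horth : ∀ γ ∈ GammaThree, ∀ γ' ∈ GammaThree, γ ≠ γ' →
      muHat1 μ ((γ : ℝ) - (γ' : ℝ)) = 0) :
    (∀ n : ℤ, n ≠ 0 → muHat1 μ (n : ℝ) = 0) ∧
    (2 : ℕ) ∉ GammaThree ∧
    (∀ γ ∈ GammaThree, muHat1 μ ((γ : ℝ) - 2) = 0) ∧
    ¬ (⊤ ≤ (Submodule.span ℂ
        (Set.range (fun γ : GammaThree => (hmem (γ : ℕ)).toLp _))).topologicalClosure) := by
  have hfourier : ∀ n : ℤ, n ≠ 0 → muHat1 μ n = 0 := fun n hn =>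
    muHat1_intCast_eq_zero_of_orthogonal horth hn
  have hperp : ∀ γ ∈ GammaThree, muHat1 μ ((γ : ℝ) - 2) = 0 := by
    intro γ hγ
    have hne : (γ : ℤ) - 2 ≠ 0 := by
      intro h
      exact two_notMem_gammaThree (by rwa [show γ = 2 by omega] at hγ)
    simpa using hfourier _ hne
  refine ⟨hfourier, two_notMem_gammaThree, hperp, fun htop => ?_⟩
  have he₂ : (hmem 2).toLp _ ≠ 0 := by
    intro h
    have h1 := inner_toLp_exp (hmem 2) (hmem 2)
    rw [h, inner_zero_left, sub_self, muHat1_zero] at h1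
    exact zero_ne_one h1
  refine Submodule.topologicalClosure_span_ne_top_of_inner_eq_zero he₂ ?_ (top_le_iff.1 htop)
  rintro _ ⟨γ, rfl⟩
  rw [inner_toLp_exp]
  exact_mod_cast hperp γ γ.2

/-- If `μ` is a compactly supported Borel probability measure on `ℝ` for which
the exponentials `{e_γ : γ ∈ Γ}` (with `Γ` the base-3 digit set `{0,1}` integers)
are orthogonal in `L²(μ)`, then `μ̂(n) = 0` for every nonzero integer `n`;
moreover `{e_γ : γ ∈ Γ}` is not complete in `L²(μ)`: indeed `2 ∉ Γ` and `e_2`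
is orthogonal to every `e_γ`, `γ ∈ Γ`. -/
theorem stmt19 (μ : Measure ℝ) [IsProbabilityMeasure μ]
    (hK : ∃ K : Set ℝ, IsCompact K ∧ μ Kᶜ = 0)
    (hmem : ∀ n : ℕ, MemLp (fun x : ℝ => Complex.exp (2 * Real.pi * Complex.I * n * x)) 2 μ)
    (horth : ∀ γ ∈ GammaThree, ∀ γ' ∈ GammaThree, γ ≠ γ' →
      muHat1 μ ((γ : ℝ) - (γ' : ℝ)) = 0) :
    (∀ n : ℤ, n ≠ 0 → muHat1 μ (n : ℝ) = 0) ∧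
    (2 : ℕ) ∉ GammaThree ∧
    (∀ γ ∈ GammaThree, muHat1 μ ((γ : ℝ) - 2) = 0) ∧
    ¬ (⊤ ≤ (Submodule.span ℂ
        (Set.range (fun γ : GammaThree => (hmem (γ : ℕ)).toLp _))).topologicalClosure) :=
  stmt19_general μ hmem horth
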